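/- Let (Ω, 𝓕, P) be a probability space, G : Ω → ℝⁿˣⁿ measurable and essentially bounded, (G̃ₖ)ₖ∈ℕ and (Ḡₖ)ₖ∈ℕ sequences of measurable ℝⁿˣⁿ-valued random variables with ∑ₖ E|G̃ₖ|² < ∞ and ∑ₖ E|Ḡₖ|² < ∞, and (Ĝᵢⱼ)ᵢ,ⱼ∈ℕ a family of integrable ℝⁿˣⁿ-valued random variables with ∑ᵢ,ⱼ |E[Ĝᵢⱼ]|² < ∞. Define the bounded linear operator 𝒢 on L²(Ω; ℝⁿ) by 𝒢ξ = Gξ + ∑ₖ G̃ₖᵀ E[Ḡₖ ξ] + ∑ₖ Ḡₖᵀ E[G̃ₖ ξ] + ∑ᵢ,ⱼ G̃ᵢᵀ E[Ĝᵢⱼ] E[G̃ⱼ ξ]. If G(ω)ᵀ = G(ω) for P-a.e. ω and E[Ĝᵢⱼ]ᵀ = E[Ĝⱼᵢ] for all i, j, then 𝒢 is self-adjoint, i.e., E[⟨𝒢ξ, η⟩] = E[⟨ξ, 𝒢η⟩] for all ξ, η ∈ L²(Ω; ℝⁿ). -/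

import Mathlib

open MeasureTheory Filter
open scoped RealInnerProductSpace

/-- Matrix–vector multiplication, viewed as a map between Euclidean spaces. -/
noncomputable def matVec {n m : ℕ} (M : Matrix (Fin n) (Fin m) ℝ)
    (v : EuclideanSpace ℝ (Fin m)) : EuclideanSpace ℝ (Fin n) :=
  (WithLp.equiv 2 (Fin n → ℝ)).symm (M.mulVec ((WithLp.equiv 2 (Fin m → ℝ)) v))

/-- Square of the Frobenius norm of a real matrix. -/
def frobSq {n m : ℕ} (M : Matrix (Fin n) (Fin m) ℝ) : ℝ := ∑ i, ∑ j, (M i j) ^ 2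

/-- Frobenius norm of a real matrix. -/
noncomputable def frob {n m : ℕ} (M : Matrix (Fin n) (Fin m) ℝ) : ℝ :=
  Real.sqrt (frobSq M)

/-- Entrywise expectation of a matrix-valued random variable. -/
noncomputable def matExp {n m : ℕ} {Ω : Type*} [MeasurableSpace Ω] (P : MeasureTheory.Measure Ω)
    (M : Ω → Matrix (Fin n) (Fin m) ℝ) : Matrix (Fin n) (Fin m) ℝ :=
  Matrix.of fun a b => ∫ ω, M ω a b ∂P

/-- Pointwise action of the mean-field operator
`𝒢ξ = Gξ + ∑ₖ G̃ₖᵀ E[Ḡₖ ξ] + ∑ₖ Ḡₖᵀ E[G̃ₖ ξ] + ∑ᵢⱼ G̃ᵢᵀ E[Ĝᵢⱼ] E[G̃ⱼ ξ]`. -/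
noncomputable def meanFieldG {n : ℕ} {Ω : Type*} [MeasurableSpace Ω]
    (P : MeasureTheory.Measure Ω)
    (G : Ω → Matrix (Fin n) (Fin n) ℝ) (Gtil Gbar : ℕ → Ω → Matrix (Fin n) (Fin n) ℝ)
    (Ghat : ℕ → ℕ → Ω → Matrix (Fin n) (Fin n) ℝ)
    (ξ : Ω → EuclideanSpace ℝ (Fin n)) (ω : Ω) : EuclideanSpace ℝ (Fin n) :=
  matVec (G ω) (ξ ω) +
    (∑' k, matVec (Gtil k ω).transpose (∫ ω', matVec (Gbar k ω') (ξ ω') ∂P)) +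
    (∑' k, matVec (Gbar k ω).transpose (∫ ω', matVec (Gtil k ω') (ξ ω') ∂P)) +
    ∑' p : ℕ × ℕ, matVec (Gtil p.1 ω).transpose
      (matVec (matExp P (Ghat p.1 p.2)) (∫ ω', matVec (Gtil p.2 ω') (ξ ω') ∂P))

/-!
Expanding the definition and exchanging the expectation with the series,
`E⟨𝒢ξ, η⟩ = E⟨Gξ, η⟩ + ∑ₖ ⟨E[Ḡₖξ], E[G̃ₖη]⟩ + ∑ₖ ⟨E[G̃ₖξ], E[Ḡₖη]⟩ + ∑ᵢⱼ ⟨E[Ĝᵢⱼ] E[G̃ⱼξ], E[G̃ᵢη]⟩`,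
and this expression is symmetric in `ξ` and `η` as soon as `G` and the block matrix
`(E[Ĝᵢⱼ])ᵢⱼ` are symmetric. The exchange is justified by Cauchy–Schwarz: the `k`-th term of a
series is dominated by `√(E|G̃ₖ|²) √(E|Ḡₖ|²) ‖ξ‖₂ ‖η‖₂`, resp.
`√(E|G̃ᵢ|² E|G̃ⱼ|²) |E[Ĝᵢⱼ]| ‖ξ‖₂ ‖η‖₂`, and these bounds are summable by AM–GM.
-/

open scoped ENNReal

namespace MeasureTheory

section SummableIntegralNorm

variable {α E ι : Type*} {_ : MeasurableSpace α} {μ : Measure α} [NormedAddCommGroup E]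
  {f : ι → α → E}

lemma tsum_lintegral_enorm_ne_top (hf : ∀ i, Integrable (f i) μ)
    (hsum : Summable fun i ↦ ∫ a, ‖f i a‖ ∂μ) : ∑' i, ∫⁻ a, ‖f i a‖ₑ ∂μ ≠ ∞ := by
  simp_rw [← ofReal_integral_norm_eq_lintegral_enorm (hf _)]
  rw [← ENNReal.ofReal_tsum_of_nonneg (fun i ↦ integral_nonneg fun a ↦ norm_nonneg _) hsum]
  exact ENNReal.ofReal_ne_top

variable [Countable ι] [CompleteSpace E]

lemma ae_summable_of_summable_integral_norm (hf : ∀ i, Integrable (f i) μ)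
    (hsum : Summable fun i ↦ ∫ a, ‖f i a‖ ∂μ) : ∀ᵐ a ∂μ, Summable fun i ↦ f i a := by
  refine (summable_norm_of_tsum_eLpNorm_ne_top le_rfl (fun i ↦ (hf i).1) ?_).mono
    fun a ha ↦ ha.of_norm
  simpa only [eLpNorm_one_eq_lintegral_enorm] using tsum_lintegral_enorm_ne_top hf hsum

lemma integrable_tsum_of_summable_integral_norm (hf : ∀ i, Integrable (f i) μ)
    (hsum : Summable fun i ↦ ∫ a, ‖f i a‖ ∂μ) : Integrable (fun a ↦ ∑' i, f i a) μ := by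
  have hL1 : ∑' i, ‖(hf i).toL1 (f i)‖ₑ ≠ ∞ := by
    simpa only [Integrable.enorm_toL1] using tsum_lintegral_enorm_ne_top hf hsum
  have hcoe : ∀ᵐ a ∂μ, ∀ i, (hf i).toL1 (f i) a = f i a :=
    ae_all_iff.2 fun i ↦ (hf i).coeFn_toL1
  refine (L1.integrable_coeFn (∑' i, (hf i).toL1 (f i))).congr ?_
  filter_upwards [Lp.coeFn_tsum hL1, hcoe] with a ha h'a
  simp only [ha, h'a]

end SummableIntegralNorm

variable {α E ι : Type*} {_ : MeasurableSpace α} {μ : Measure α} [NormedAddCommGroup E]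
  [InnerProductSpace ℝ E] [CompleteSpace E] [Countable ι]

lemma integral_inner_tsum {f : ι → α → E} {η : α → E}
    (hf : ∀ i, AEStronglyMeasurable (f i) μ) (hη : AEStronglyMeasurable η μ)
    (hint : ∀ i, Integrable (fun a ↦ ‖f i a‖ * ‖η a‖) μ)
    (hsum : Summable fun i ↦ ∫ a, ‖f i a‖ * ‖η a‖ ∂μ) :
    Integrable (fun a ↦ ⟪∑' i, f i a, η a⟫) μ ∧
      ∫ a, ⟪∑' i, f i a, η a⟫ ∂μ = ∑' i, ∫ a, ⟪f i a, η a⟫ ∂μ := by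
  have hnorm : ∀ i a, ‖‖f i a‖ * ‖η a‖‖ = ‖f i a‖ * ‖η a‖ := fun i a ↦
    Real.norm_of_nonneg (by positivity)
  have hg : ∀ i, Integrable (fun a ↦ ⟪f i a, η a⟫) μ := fun i ↦
    (hint i).mono' ((hf i).inner hη) (ae_of_all _ fun a ↦ norm_inner_le_norm _ _)
  have hgsum : Summable fun i ↦ ∫ a, ‖⟪f i a, η a⟫‖ ∂μ :=
    hsum.of_nonneg_of_le (fun i ↦ integral_nonneg fun a ↦ norm_nonneg _)
      fun i ↦ integral_mono (hg i).norm (hint i) fun a ↦ norm_inner_le_norm _ _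
  have hpointwise : ∀ᵐ a ∂μ, ⟪∑' i, f i a, η a⟫ = ∑' i, ⟪f i a, η a⟫ := by
    filter_upwards [ae_summable_of_summable_integral_norm hint (by simpa only [hnorm] using hsum)]
      with a ha
    rcases eq_or_ne (η a) 0 with h0 | h0
    · simp [h0]
    -- where `η a ≠ 0`, summability of `‖f i a‖ * ‖η a‖` makes `∑ f i a` converge absolutely
    have hfa : Summable fun i ↦ f i a :=
      .of_norm ((summable_mul_right_iff (norm_ne_zero_iff.2 h0)).1 ha)
    rw [real_inner_comm, ← innerSL_apply_apply ℝ, (innerSL ℝ (η a)).map_tsum hfa]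
    simp_rw [innerSL_apply_apply, real_inner_comm (η a)]
  refine ⟨(integrable_tsum_of_summable_integral_norm hg hgsum).congr
    (hpointwise.mono fun a h ↦ h.symm), ?_⟩
  rw [integral_congr_ae hpointwise, integral_tsum_of_summable_integral_norm hg hgsum]

end MeasureTheory

open scoped Matrix

section MatVec

variable {n m : ℕ}

lemma frobSq_nonneg (M : Matrix (Fin n) (Fin m) ℝ) : 0 ≤ frobSq M := by
  unfold frobSq; positivity

lemma frob_nonneg (M : Matrix (Fin n) (Fin m) ℝ) : 0 ≤ frob M :=
  Real.sqrt_nonneg _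

lemma frob_sq (M : Matrix (Fin n) (Fin m) ℝ) : frob M ^ 2 = frobSq M :=
  Real.sq_sqrt (frobSq_nonneg M)

lemma frob_transpose (M : Matrix (Fin n) (Fin m) ℝ) : frob Mᵀ = frob M := by
  unfold frob frobSq
  rw [Finset.sum_comm]
  rfl

lemma matVec_apply (M : Matrix (Fin n) (Fin m) ℝ) (v : EuclideanSpace ℝ (Fin m)) (i : Fin n) :
    matVec M v i = ∑ j, M i j * v j :=
  rfl

lemma inner_matVec (M : Matrix (Fin n) (Fin m) ℝ) (v : EuclideanSpace ℝ (Fin m))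
    (w : EuclideanSpace ℝ (Fin n)) : ⟪matVec M v, w⟫ = ⟪v, matVec Mᵀ w⟫ := by
  simp only [PiLp.inner_apply, RCLike.inner_apply, conj_trivial, matVec_apply,
    Matrix.transpose_apply, Finset.sum_mul, Finset.mul_sum]
  rw [Finset.sum_comm]
  exact Finset.sum_congr rfl fun i _ ↦ Finset.sum_congr rfl fun j _ ↦ by ring

lemma inner_matVec_comm_of_transpose_eq {M : Matrix (Fin n) (Fin n) ℝ} (hM : Mᵀ = M)
    (v w : EuclideanSpace ℝ (Fin n)) : ⟪matVec M v, w⟫ = ⟪matVec M w, v⟫ := by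
  rw [inner_matVec, hM, real_inner_comm]

lemma norm_matVec_le (M : Matrix (Fin n) (Fin m) ℝ) (v : EuclideanSpace ℝ (Fin m)) :
    ‖matVec M v‖ ≤ frob M * ‖v‖ := by
  refine (pow_le_pow_iff_left₀ (norm_nonneg _) (by unfold frob; positivity) two_ne_zero).1 ?_
  rw [mul_pow, frob_sq, EuclideanSpace.norm_sq_eq, EuclideanSpace.norm_sq_eq, frobSq,
    Finset.sum_mul]
  refine Finset.sum_le_sum fun i _ ↦ ?_
  simpa only [Real.norm_eq_abs, sq_abs, matVec_apply] using
    Finset.sum_mul_sq_le_sq_mul_sq Finset.univ (M i) v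

lemma continuous_frob : Continuous (frob : Matrix (Fin n) (Fin m) ℝ → ℝ) := by
  unfold frob frobSq; fun_prop

lemma continuous_matVec :
    Continuous fun p : Matrix (Fin n) (Fin m) ℝ × EuclideanSpace ℝ (Fin m) ↦ matVec p.1 p.2 :=
  (PiLp.continuous_toLp 2 _).comp
    (continuous_fst.matrix_mulVec ((PiLp.continuous_ofLp 2 _).comp continuous_snd))

end MatVec

section SquareIntegrable

variable {Ω : Type*} [MeasurableSpace Ω] {P : Measure Ω} {n m : ℕ}

lemma integral_mul_le_sqrt_mul_sqrt {f g : Ω → ℝ} (hf0 : 0 ≤ f) (hg0 : 0 ≤ g)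
    (hf : MemLp f 2 P) (hg : MemLp g 2 P) :
    ∫ ω, f ω * g ω ∂P ≤ √(∫ ω, f ω ^ 2 ∂P) * √(∫ ω, g ω ^ 2 ∂P) := by
  have h := integral_mul_le_Lp_mul_Lq_of_nonneg Real.HolderConjugate.two_two
    (ae_of_all _ hf0) (ae_of_all _ hg0) (by simpa using hf) (by simpa using hg)
  simpa only [Real.rpow_two, ← Real.sqrt_eq_rpow] using h

lemma aestronglyMeasurable_of_measurable_entry {F : Ω → Matrix (Fin n) (Fin m) ℝ}
    (hF : ∀ i j, Measurable fun ω ↦ F ω i j) : AEStronglyMeasurable F P :=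
  -- `Matrix` carries no `MeasurableSpace` instance; measure `F` as a map into `Fin n → Fin m → ℝ`
  (show Measurable (Matrix.of.symm ∘ F) from
    measurable_pi_iff.2 fun i ↦ measurable_pi_iff.2 (hF i)).aestronglyMeasurable

variable {F : Ω → Matrix (Fin n) (Fin m) ℝ} {ξ : Ω → EuclideanSpace ℝ (Fin m)}

lemma aestronglyMeasurable_matVec (hF : ∀ i j, Measurable fun ω ↦ F ω i j)
    (hξ : AEStronglyMeasurable ξ P) : AEStronglyMeasurable (fun ω ↦ matVec (F ω) (ξ ω)) P :=
  continuous_matVec.comp_aestronglyMeasurable₂ (aestronglyMeasurable_of_measurable_entry hF) hξ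

lemma memLp_frob (hF : ∀ i j, Measurable fun ω ↦ F ω i j)
    (hFint : Integrable (fun ω ↦ frobSq (F ω)) P) : MemLp (fun ω ↦ frob (F ω)) 2 P := by
  refine (memLp_two_iff_integrable_sq ?_).2 (by simpa only [frob_sq] using hFint)
  exact continuous_frob.comp_aestronglyMeasurable (aestronglyMeasurable_of_measurable_entry hF)

end SquareIntegrable

section SquareIntegrable

variable {Ω : Type*} [MeasurableSpace Ω] {P : Measure Ω} {n m : ℕ}
  {F : Ω → Matrix (Fin n) (Fin m) ℝ} {ξ : Ω → EuclideanSpace ℝ (Fin m)}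

lemma integrable_frob_mul_norm (hF : ∀ i j, Measurable fun ω ↦ F ω i j)
    (hFint : Integrable (fun ω ↦ frobSq (F ω)) P) (hξ : MemLp ξ 2 P) :
    Integrable (fun ω ↦ frob (F ω) * ‖ξ ω‖) P :=
  (memLp_frob hF hFint).integrable_mul hξ.norm

lemma integral_frob_mul_norm_le (hF : ∀ i j, Measurable fun ω ↦ F ω i j)
    (hFint : Integrable (fun ω ↦ frobSq (F ω)) P) (hξ : MemLp ξ 2 P) :
    ∫ ω, frob (F ω) * ‖ξ ω‖ ∂P ≤ √(∫ ω, frobSq (F ω) ∂P) * √(∫ ω, ‖ξ ω‖ ^ 2 ∂P) := by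
  simpa only [frob_sq] using integral_mul_le_sqrt_mul_sqrt (fun ω ↦ frob_nonneg (F ω))
    (fun ω ↦ norm_nonneg (ξ ω)) (memLp_frob hF hFint) hξ.norm

lemma integrable_matVec (hF : ∀ i j, Measurable fun ω ↦ F ω i j)
    (hFint : Integrable (fun ω ↦ frobSq (F ω)) P) (hξ : MemLp ξ 2 P) :
    Integrable (fun ω ↦ matVec (F ω) (ξ ω)) P :=
  (integrable_frob_mul_norm hF hFint hξ).mono' (aestronglyMeasurable_matVec hF hξ.1)
    (ae_of_all _ fun _ ↦ norm_matVec_le _ _)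

lemma norm_integral_matVec_le (hF : ∀ i j, Measurable fun ω ↦ F ω i j)
    (hFint : Integrable (fun ω ↦ frobSq (F ω)) P) (hξ : MemLp ξ 2 P) :
    ‖∫ ω, matVec (F ω) (ξ ω) ∂P‖ ≤ √(∫ ω, frobSq (F ω) ∂P) * √(∫ ω, ‖ξ ω‖ ^ 2 ∂P) :=
  calc ‖∫ ω, matVec (F ω) (ξ ω) ∂P‖ ≤ ∫ ω, ‖matVec (F ω) (ξ ω)‖ ∂P :=
        norm_integral_le_integral_norm _
    _ ≤ ∫ ω, frob (F ω) * ‖ξ ω‖ ∂P :=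
        integral_mono (integrable_matVec hF hFint hξ).norm (integrable_frob_mul_norm hF hFint hξ)
          fun _ ↦ norm_matVec_le _ _
    _ ≤ _ := integral_frob_mul_norm_le hF hFint hξ

lemma integrable_inner_matVec_of_frob_le {G : Ω → Matrix (Fin n) (Fin n) ℝ} {C : ℝ}
    (hG : ∀ i j, Measurable fun ω ↦ G ω i j) (hGC : ∀ᵐ ω ∂P, frob (G ω) ≤ C)
    {ξ η : Ω → EuclideanSpace ℝ (Fin n)} (hξ : MemLp ξ 2 P) (hη : MemLp η 2 P) :
    Integrable (fun ω ↦ ⟪matVec (G ω) (ξ ω), η ω⟫) P := by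
  refine ((hξ.norm.integrable_mul hη.norm).const_mul C).mono'
    ((aestronglyMeasurable_matVec hG hξ.1).inner hη.1) ?_
  filter_upwards [hGC] with ω hω
  calc ‖⟪matVec (G ω) (ξ ω), η ω⟫‖ ≤ ‖matVec (G ω) (ξ ω)‖ * ‖η ω‖ := norm_inner_le_norm _ _
    _ ≤ frob (G ω) * ‖ξ ω‖ * ‖η ω‖ := by gcongr; exact norm_matVec_le _ _
    _ ≤ C * (‖ξ ω‖ * ‖η ω‖) := by rw [← mul_assoc]; gcongr

variable {ι : Type*} [Countable ι]

lemma integral_inner_tsum_matVec_transpose {F : ι → Ω → Matrix (Fin n) (Fin m) ℝ}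
    {c : ι → EuclideanSpace ℝ (Fin n)} {η : Ω → EuclideanSpace ℝ (Fin m)}
    (hF : ∀ k i j, Measurable fun ω ↦ F k ω i j)
    (hFint : ∀ k, Integrable (fun ω ↦ frobSq (F k ω)) P)
    (hc : Summable fun k ↦ √(∫ ω, frobSq (F k ω) ∂P) * ‖c k‖) (hη : MemLp η 2 P) :
    Integrable (fun ω ↦ ⟪∑' k, matVec (F k ω)ᵀ (c k), η ω⟫) P ∧
      ∫ ω, ⟪∑' k, matVec (F k ω)ᵀ (c k), η ω⟫ ∂P = ∑' k, ⟪c k, ∫ ω, matVec (F k ω) (η ω) ∂P⟫ := by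
  have hbound : ∀ k ω, ‖matVec (F k ω)ᵀ (c k)‖ * ‖η ω‖ ≤ frob (F k ω) * ‖η ω‖ * ‖c k‖ :=
    fun k ω ↦ by
      rw [mul_right_comm, ← frob_transpose]
      gcongr
      exact norm_matVec_le _ _
  have hdom : ∀ k, Integrable (fun ω ↦ frob (F k ω) * ‖η ω‖ * ‖c k‖) P := fun k ↦
    (integrable_frob_mul_norm (hF k) (hFint k) hη).mul_const _
  have hmeas : ∀ k, AEStronglyMeasurable (fun ω ↦ matVec (F k ω)ᵀ (c k)) P := fun k ↦
    aestronglyMeasurable_matVec (fun i j ↦ hF k j i) aestronglyMeasurable_const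
  have hint : ∀ k, Integrable (fun ω ↦ ‖matVec (F k ω)ᵀ (c k)‖ * ‖η ω‖) P := fun k ↦
    (hdom k).mono' ((hmeas k).norm.mul hη.1.norm)
      (ae_of_all _ fun ω ↦ by simpa only [Real.norm_eq_abs, abs_mul, abs_norm] using hbound k ω)
  have hsum : Summable fun k ↦ ∫ ω, ‖matVec (F k ω)ᵀ (c k)‖ * ‖η ω‖ ∂P := by
    refine (hc.mul_right √(∫ ω, ‖η ω‖ ^ 2 ∂P)).of_nonneg_of_le
      (fun k ↦ integral_nonneg fun ω ↦ by positivity) fun k ↦ ?_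
    calc ∫ ω, ‖matVec (F k ω)ᵀ (c k)‖ * ‖η ω‖ ∂P
        ≤ (∫ ω, frob (F k ω) * ‖η ω‖ ∂P) * ‖c k‖ := by
          rw [← integral_mul_const]; exact integral_mono (hint k) (hdom k) (hbound k)
      _ ≤ _ := by
          rw [mul_right_comm]
          gcongr
          exact integral_frob_mul_norm_le (hF k) (hFint k) hη
  obtain ⟨hintegrable, hintegral⟩ := MeasureTheory.integral_inner_tsum
    hmeas hη.1 hint hsum
  refine ⟨hintegrable, hintegral.trans (tsum_congr fun k ↦ ?_)⟩
  simp_rw [inner_matVec, Matrix.transpose_transpose]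
  exact integral_inner (integrable_matVec (hF k) (hFint k) hη) (c k)

end SquareIntegrable

lemma summable_sqrt_mul_sqrt {ι : Type*} {a b : ι → ℝ} (ha0 : ∀ i, 0 ≤ a i) (hb0 : ∀ i, 0 ≤ b i)
    (ha : Summable a) (hb : Summable b) : Summable fun i ↦ √(a i) * √(b i) := by
  refine ((ha.add hb).div_const 2).of_nonneg_of_le (fun i ↦ by positivity) fun i ↦ ?_
  have := two_mul_le_add_sq √(a i) √(b i)
  rw [Real.sq_sqrt (ha0 i), Real.sq_sqrt (hb0 i)] at this
  linarith

section MeanFieldTerms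

variable {Ω : Type*} [MeasurableSpace Ω] {P : Measure Ω} {ι : Type*} [Countable ι] {n m l : ℕ}

lemma integral_inner_tsum_cross {F : ι → Ω → Matrix (Fin n) (Fin m) ℝ}
    {F' : ι → Ω → Matrix (Fin n) (Fin l) ℝ} {ξ : Ω → EuclideanSpace ℝ (Fin l)}
    {η : Ω → EuclideanSpace ℝ (Fin m)}
    (hF : ∀ k i j, Measurable fun ω ↦ F k ω i j) (hF' : ∀ k i j, Measurable fun ω ↦ F' k ω i j)
    (hFint : ∀ k, Integrable (fun ω ↦ frobSq (F k ω)) P)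
    (hF'int : ∀ k, Integrable (fun ω ↦ frobSq (F' k ω)) P)
    (hFsum : Summable fun k ↦ ∫ ω, frobSq (F k ω) ∂P)
    (hF'sum : Summable fun k ↦ ∫ ω, frobSq (F' k ω) ∂P) (hξ : MemLp ξ 2 P) (hη : MemLp η 2 P) :
    Integrable (fun ω ↦ ⟪∑' k, matVec (F k ω)ᵀ (∫ ω', matVec (F' k ω') (ξ ω') ∂P), η ω⟫) P ∧
      ∫ ω, ⟪∑' k, matVec (F k ω)ᵀ (∫ ω', matVec (F' k ω') (ξ ω') ∂P), η ω⟫ ∂P =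
        ∑' k, ⟪∫ ω, matVec (F' k ω) (ξ ω) ∂P, ∫ ω, matVec (F k ω) (η ω) ∂P⟫ := by
  refine integral_inner_tsum_matVec_transpose hF hFint ?_ hη
  refine ((summable_sqrt_mul_sqrt (fun k ↦ integral_nonneg fun ω ↦ frobSq_nonneg _)
    (fun k ↦ integral_nonneg fun ω ↦ frobSq_nonneg _) hFsum hF'sum).mul_right
      √(∫ ω, ‖ξ ω‖ ^ 2 ∂P)).of_nonneg_of_le (fun k ↦ by positivity) fun k ↦ ?_
  rw [mul_assoc]
  gcongr
  exact norm_integral_matVec_le (hF' k) (hF'int k) hξ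

lemma integral_inner_tsum_quadratic {F : ι → Ω → Matrix (Fin n) (Fin m) ℝ}
    {A : ι × ι → Matrix (Fin n) (Fin n) ℝ} {ξ η : Ω → EuclideanSpace ℝ (Fin m)}
    (hF : ∀ k i j, Measurable fun ω ↦ F k ω i j)
    (hFint : ∀ k, Integrable (fun ω ↦ frobSq (F k ω)) P)
    (hFsum : Summable fun k ↦ ∫ ω, frobSq (F k ω) ∂P) (hA : Summable fun p ↦ frobSq (A p))
    (hξ : MemLp ξ 2 P) (hη : MemLp η 2 P) :
    Integrable (fun ω ↦ ⟪∑' p : ι × ι,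
      matVec (F p.1 ω)ᵀ (matVec (A p) (∫ ω', matVec (F p.2 ω') (ξ ω') ∂P)), η ω⟫) P ∧
      ∫ ω, ⟪∑' p : ι × ι,
        matVec (F p.1 ω)ᵀ (matVec (A p) (∫ ω', matVec (F p.2 ω') (ξ ω') ∂P)), η ω⟫ ∂P =
        ∑' p : ι × ι, ⟪matVec (A p) (∫ ω, matVec (F p.2 ω) (ξ ω) ∂P),
          ∫ ω, matVec (F p.1 ω) (η ω) ∂P⟫ := by
  have ha0 : ∀ k, 0 ≤ ∫ ω, frobSq (F k ω) ∂P := fun k ↦ integral_nonneg fun ω ↦ frobSq_nonneg _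
  have hF₁ : ∀ (p : ι × ι) i j, Measurable fun ω ↦ F p.1 ω i j := fun p ↦ hF p.1
  have hF₁int : ∀ p : ι × ι, Integrable (fun ω ↦ frobSq (F p.1 ω)) P := fun p ↦ hFint p.1
  refine integral_inner_tsum_matVec_transpose hF₁ hF₁int ?_ hη
  have hprod : Summable fun p : ι × ι ↦ (∫ ω, frobSq (F p.1 ω) ∂P) * ∫ ω, frobSq (F p.2 ω) ∂P :=
    hFsum.mul_of_nonneg hFsum ha0 ha0
  refine ((summable_sqrt_mul_sqrt (fun p ↦ mul_nonneg (ha0 _) (ha0 _))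
    (fun p ↦ frobSq_nonneg _) hprod hA).mul_right √(∫ ω, ‖ξ ω‖ ^ 2 ∂P)).of_nonneg_of_le
      (fun p ↦ by positivity) fun p ↦ ?_
  calc √(∫ ω, frobSq (F p.1 ω) ∂P) * ‖matVec (A p) (∫ ω, matVec (F p.2 ω) (ξ ω) ∂P)‖
      ≤ √(∫ ω, frobSq (F p.1 ω) ∂P) *
          (frob (A p) * (√(∫ ω, frobSq (F p.2 ω) ∂P) * √(∫ ω, ‖ξ ω‖ ^ 2 ∂P))) := by
        gcongr
        exact (norm_matVec_le _ _).trans (mul_le_mul_of_nonneg_left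
          (norm_integral_matVec_le (hF p.2) (hFint p.2) hξ) (frob_nonneg _))
    _ = _ := by
        rw [Real.sqrt_mul (ha0 _), frob]
        ring

end MeanFieldTerms

lemma tsum_inner_matVec_swap {ι : Type*} {n : ℕ} {A : ι × ι → Matrix (Fin n) (Fin n) ℝ}
    (hA : ∀ i j, (A (i, j))ᵀ = A (j, i)) (x y : ι → EuclideanSpace ℝ (Fin n)) :
    ∑' p : ι × ι, ⟪matVec (A p) (x p.2), y p.1⟫ = ∑' p : ι × ι, ⟪matVec (A p) (y p.2), x p.1⟫ := by
  rw [← (Equiv.prodComm ι ι).tsum_eq]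
  refine tsum_congr fun ⟨i, j⟩ ↦ ?_
  rw [Equiv.prodComm_apply, Prod.swap_prod_mk, inner_matVec, hA, real_inner_comm]

section MeanField

variable {n : ℕ} {Ω : Type*} [MeasurableSpace Ω] {P : Measure Ω}
  {G : Ω → Matrix (Fin n) (Fin n) ℝ} {Gtil Gbar : ℕ → Ω → Matrix (Fin n) (Fin n) ℝ}
  {Ghat : ℕ → ℕ → Ω → Matrix (Fin n) (Fin n) ℝ} {ξ η : Ω → EuclideanSpace ℝ (Fin n)}

lemma integral_inner_meanFieldG (hGmeas : ∀ i j, Measurable fun ω ↦ G ω i j)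
    (hGbdd : ∃ C : ℝ, ∀ᵐ ω ∂P, frob (G ω) ≤ C)
    (hGtilMeas : ∀ k i j, Measurable fun ω ↦ Gtil k ω i j)
    (hGbarMeas : ∀ k i j, Measurable fun ω ↦ Gbar k ω i j)
    (hGtilInt : ∀ k, Integrable (fun ω ↦ frobSq (Gtil k ω)) P)
    (hGbarInt : ∀ k, Integrable (fun ω ↦ frobSq (Gbar k ω)) P)
    (hGtilSum : Summable fun k ↦ ∫ ω, frobSq (Gtil k ω) ∂P)
    (hGbarSum : Summable fun k ↦ ∫ ω, frobSq (Gbar k ω) ∂P)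
    (hGhatSum : Summable fun p : ℕ × ℕ ↦ frobSq (matExp P (Ghat p.1 p.2)))
    (hξ : MemLp ξ 2 P) (hη : MemLp η 2 P) :
    ∫ ω, ⟪meanFieldG P G Gtil Gbar Ghat ξ ω, η ω⟫ ∂P =
      ∫ ω, ⟪matVec (G ω) (ξ ω), η ω⟫ ∂P
      + ∑' k, ⟪∫ ω, matVec (Gbar k ω) (ξ ω) ∂P, ∫ ω, matVec (Gtil k ω) (η ω) ∂P⟫
      + ∑' k, ⟪∫ ω, matVec (Gtil k ω) (ξ ω) ∂P, ∫ ω, matVec (Gbar k ω) (η ω) ∂P⟫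
      + ∑' p : ℕ × ℕ, ⟪matVec (matExp P (Ghat p.1 p.2)) (∫ ω, matVec (Gtil p.2 ω) (ξ ω) ∂P),
          ∫ ω, matVec (Gtil p.1 ω) (η ω) ∂P⟫ := by
  obtain ⟨C, hC⟩ := hGbdd
  have hGint := integrable_inner_matVec_of_frob_le hGmeas hC hξ hη
  obtain ⟨hGtilGbarInt, hGtilGbar⟩ := integral_inner_tsum_cross hGtilMeas hGbarMeas hGtilInt
    hGbarInt hGtilSum hGbarSum hξ hη
  obtain ⟨hGbarGtilInt, hGbarGtil⟩ := integral_inner_tsum_cross hGbarMeas hGtilMeas hGbarInt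
    hGtilInt hGbarSum hGtilSum hξ hη
  obtain ⟨hGhatInt, hGhat⟩ := integral_inner_tsum_quadratic hGtilMeas hGtilInt hGtilSum
    hGhatSum hξ hη
  simp only [meanFieldG, inner_add_left]
  rw [integral_add ?_ hGhatInt, integral_add ?_ hGbarGtilInt, integral_add hGint hGtilGbarInt,
    hGtilGbar, hGbarGtil, hGhat]
  · exact hGint.add hGtilGbarInt
  · exact (hGint.add hGtilGbarInt).add hGbarGtilInt

end MeanField

theorem meanField_terminal_operator_selfAdjoint
    (n : ℕ) {Ω : Type*} [MeasurableSpace Ω] (P : Measure Ω)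
    (G : Ω → Matrix (Fin n) (Fin n) ℝ)
    (Gtil Gbar : ℕ → Ω → Matrix (Fin n) (Fin n) ℝ)
    (Ghat : ℕ → ℕ → Ω → Matrix (Fin n) (Fin n) ℝ)
    (hGmeas : ∀ i j, Measurable fun ω => G ω i j)
    (hGbdd : ∃ C : ℝ, ∀ᵐ ω ∂P, frob (G ω) ≤ C)
    (hGtilMeas : ∀ k i j, Measurable fun ω => Gtil k ω i j)
    (hGbarMeas : ∀ k i j, Measurable fun ω => Gbar k ω i j)
    (hGtilInt : ∀ k, Integrable (fun ω => frobSq (Gtil k ω)) P)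
    (hGbarInt : ∀ k, Integrable (fun ω => frobSq (Gbar k ω)) P)
    (hGtilSum : Summable fun k => ∫ ω, frobSq (Gtil k ω) ∂P)
    (hGbarSum : Summable fun k => ∫ ω, frobSq (Gbar k ω) ∂P)
    (hGhatSum : Summable fun p : ℕ × ℕ => frobSq (matExp P (Ghat p.1 p.2)))
    (hGsymm : ∀ᵐ ω ∂P, (G ω).transpose = G ω)
    (hGhatSymm : ∀ i j, (matExp P (Ghat i j)).transpose = matExp P (Ghat j i)) :
    ∀ ξ η : Ω → EuclideanSpace ℝ (Fin n), MemLp ξ 2 P → MemLp η 2 P →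
      ∫ ω, ⟪meanFieldG P G Gtil Gbar Ghat ξ ω, η ω⟫ ∂P =
        ∫ ω, ⟪ξ ω, meanFieldG P G Gtil Gbar Ghat η ω⟫ ∂P := by
  intro ξ η hξ hη
  have expand {ξ η : Ω → EuclideanSpace ℝ (Fin n)} (hξ : MemLp ξ 2 P) (hη : MemLp η 2 P) :=
    integral_inner_meanFieldG hGmeas hGbdd hGtilMeas hGbarMeas hGtilInt hGbarInt hGtilSum
      hGbarSum hGhatSum hξ hη
  have hG : ∫ ω, ⟪matVec (G ω) (ξ ω), η ω⟫ ∂P = ∫ ω, ⟪matVec (G ω) (η ω), ξ ω⟫ ∂P :=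
    integral_congr_ae (hGsymm.mono fun ω h ↦ inner_matVec_comm_of_transpose_eq h _ _)
  have hGhat := tsum_inner_matVec_swap (A := fun p ↦ matExp P (Ghat p.1 p.2)) hGhatSymm
    (fun j ↦ ∫ ω, matVec (Gtil j ω) (ξ ω) ∂P) (fun i ↦ ∫ ω, matVec (Gtil i ω) (η ω) ∂P)
  simp_rw [real_inner_comm _ (ξ _)]
  rw [expand hξ hη, expand hη hξ, hG, hGhat]
  simp only [real_inner_comm]
  ring
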